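/- (Splittability of III* into I₀* + I₁ + I₁ + I₁) There exist matrices B₁, B₂, B₃ ∈ SL(2,ℤ), each conjugate in SL(2,ℤ) to A_{I₁} = [[1,1],[0,1]], such that the product (-I)·B₁·B₂·B₃ is conjugate in SL(2,ℤ) to A_{III*} = [[0,-1],[1,0]]. In other words, the fiber type III* admits a monodromy decomposition into I₀* + I₁ + I₁ + I₁, where the standard monodromy matrix of I₀* is -I. -/

import Mathlib

/-- The special linear group `SL(2, ℤ)`. -/
abbrev SL2Z := Matrix.SpecialLinearGroup (Fin 2) ℤ

/-- `A` is conjugate to `B` in `SL(2, ℤ)`: there is `P ∈ SL(2,ℤ)` with `P * A * P⁻¹ = B`. -/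
def ConjTo (A B : SL2Z) : Prop := ∃ P : SL2Z, P * A * P⁻¹ = B

/-- The standard monodromy matrix `A_{I_n} = [[1,n],[0,1]]`. -/
def AI (n : ℤ) : SL2Z := ⟨!![1, n; 0, 1], by simp [Matrix.det_fin_two_of]⟩

/-- The standard monodromy matrix `A_{II} = [[1,1],[-1,0]]`. -/
def AII : SL2Z := ⟨!![1, 1; -1, 0], by norm_num [Matrix.det_fin_two_of]⟩

/-- The standard monodromy matrix `A_{III} = [[0,1],[-1,0]]`. -/
def AIII : SL2Z := ⟨!![0, 1; -1, 0], by norm_num [Matrix.det_fin_two_of]⟩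

/-- The standard monodromy matrix `A_{IV} = [[0,1],[-1,-1]]`. -/
def AIV : SL2Z := ⟨!![0, 1; -1, -1], by norm_num [Matrix.det_fin_two_of]⟩

/-- The standard monodromy matrix `A_{I₀*} = -I`. -/
def negI : SL2Z := ⟨!![-1, 0; 0, -1], by norm_num [Matrix.det_fin_two_of]⟩

/-- The standard monodromy matrix `A_{I_n*} = -[[1,n],[0,1]]`. -/
def AIstar (n : ℤ) : SL2Z := ⟨!![-1, -n; 0, -1], by simp [Matrix.det_fin_two_of]⟩

/-- The standard monodromy matrix `A_{IV*} = [[-1,-1],[1,0]]`. -/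
def AIVstar : SL2Z := ⟨!![-1, -1; 1, 0], by norm_num [Matrix.det_fin_two_of]⟩

/-- The standard monodromy matrix `A_{III*} = [[0,-1],[1,0]]`. -/
def AIIIstar : SL2Z := ⟨!![0, -1; 1, 0], by norm_num [Matrix.det_fin_two_of]⟩

/-- The standard monodromy matrix `A_{II*} = [[0,-1],[1,1]]`. -/
def AIIstar : SL2Z := ⟨!![0, -1; 1, 1], by norm_num [Matrix.det_fin_two_of]⟩

/-! With `S = A_{III*}` and `T = A_{I₁}`, the modular relations `S² = (ST)³ = -I` give
`T · (S T S⁻¹) · T = S⁻¹ = -S`, so `-I · T · (S T S⁻¹) · T = S` on the nose. -/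

theorem conjTo_refl (A : SL2Z) : ConjTo A A := ⟨1, by group⟩

theorem conjTo_conj (P A : SL2Z) : ConjTo (P * A * P⁻¹) A := ⟨P⁻¹, by group⟩

theorem negI_mul_AI_one_mul_conj_mul_AI_one :
    negI * AI 1 * (AIIIstar * AI 1 * AIIIstar⁻¹) * AI 1 = AIIIstar := by
  decide

/-- The fiber type `III*` admits a monodromy decomposition into `I₀* + I₁ + I₁ + I₁`,
where the standard monodromy matrix of `I₀*` is `-I`. -/
theorem IIIstar_decomposition_I0star_I1_I1_I1 :
    ∃ B₁ B₂ B₃ : SL2Z, ConjTo B₁ (AI 1) ∧ ConjTo B₂ (AI 1) ∧ ConjTo B₃ (AI 1) ∧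
      ConjTo (negI * B₁ * B₂ * B₃) AIIIstar :=
  ⟨AI 1, AIIIstar * AI 1 * AIIIstar⁻¹, AI 1, conjTo_refl _, conjTo_conj _ _, conjTo_refl _,
    negI_mul_AI_one_mul_conj_mul_AI_one ▸ conjTo_refl _⟩
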